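/- Let H be a bialgebra over a field k that is also a graded coalgebra H = ⊕_{n≥0} H_n. If U and V are left H-modules with finite cycles, then the tensor product U ⊗ V, with the diagonal H-action h·(x⊗y) = Σ h₁·x ⊗ h₂·y, is again a left H-module with finite cycles; more precisely, for x ∈ U with bound n_x and y ∈ V with bound n_y, one may take n_{x⊗y} = 2n_x + 2n_y, i.e. H_i·(x⊗y) = 0 for all i > 2n_x + 2n_y. -/

import Mathlib

/-!
STATEMENT 0.  Let `H` be a bialgebra over a field `k` which is also a graded coalgebra
`H = ⊕ₙ Hₙ`.  If `U` and `V` are left `H`-modules with finite cycles, then `U ⊗ V`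
with the diagonal action `h • (x ⊗ y) = Σ h₁•x ⊗ h₂•y` is again an `H`-module with
finite cycles; more precisely for `x` with bound `n_x` and `y` with bound `n_y` one may
take `n_{x⊗y} = 2n_x + 2n_y`.
-/

open TensorProduct

noncomputable section

namespace LQTPaper

variable (k : Type*) [Field k]

/-- The image of `U ⊗ V` inside `H ⊗[k] H'`, for submodules `U ⊆ H`, `V ⊆ H'`. -/
def tsub {H H' : Type*} [AddCommGroup H] [Module k H] [AddCommGroup H'] [Module k H']
    (U : Submodule k H) (V : Submodule k H') : Submodule k (H ⊗[k] H') :=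
  LinearMap.range (TensorProduct.map U.subtype V.subtype)

/-- The action of `H` on an `H`-module `M`, as a `k`-linear map `H →ₗ[k] (M →ₗ[k] M)`. -/
def act (H M : Type*) [Ring H] [Algebra k H] [AddCommGroup M] [Module k M]
    [Module H M] [IsScalarTower k H M] : H →ₗ[k] M →ₗ[k] M :=
  (Algebra.lsmul k k M : H →ₐ[k] Module.End k M).toLinearMap

/-- A bialgebra `H` which is a graded coalgebra `H = ⊕ₙ Hₙ`. -/
structure CoalgebraGrading (H : Type*) [Ring H] [Bialgebra k H] where
  grade : ℕ → Submodule k H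
  internal : DirectSum.IsInternal grade
  comul_mem : ∀ n, ∀ x ∈ grade n,
    Coalgebra.comul (R := k) x ∈
      ⨆ p : {p : ℕ × ℕ // p.1 + p.2 = n}, tsub k (grade p.1.1) (grade p.1.2)
  counit_zero : ∀ n, 0 < n → ∀ x ∈ grade n, Coalgebra.counit (R := k) x = 0

variable {H : Type*} [Ring H] [Bialgebra k H]

/-- `n` is a bound for the cycle of `x`:  `H_i • x = 0` for all `i > n`. -/
def CoalgebraGrading.IsBound (G : CoalgebraGrading k H) {M : Type*} [AddCommGroup M]
    [Module k M] [Module H M] [IsScalarTower k H M] (x : M) (n : ℕ) : Prop :=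
  ∀ i, n < i → ∀ h ∈ G.grade i, h • x = 0

/-- `M` is an `H`-module with finite cycles. -/
def CoalgebraGrading.FinCycles (G : CoalgebraGrading k H) (M : Type*) [AddCommGroup M]
    [Module k M] [Module H M] [IsScalarTower k H M] : Prop :=
  ∀ x : M, ∃ n, G.IsBound k x n

variable {U V : Type*} [AddCommGroup U] [Module k U] [Module H U] [IsScalarTower k H U]
  [AddCommGroup V] [Module k V] [Module H V] [IsScalarTower k H V]

/-- The diagonal action of `H` on `U ⊗ V`:  `h • (x ⊗ y) = Σ h₁•x ⊗ h₂•y`. -/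
def diagAct : H →ₗ[k] (U ⊗[k] V) →ₗ[k] (U ⊗[k] V) :=
  (TensorProduct.homTensorHomMap (RingHom.id k) U V U V).comp
    ((TensorProduct.map (act k H U) (act k H V)).comp (Coalgebra.comul (R := k)))

/-!
For `h ∈ H_i` write `Δh = Σ h₁ ⊗ h₂` with `h₁ ∈ H_a`, `h₂ ∈ H_b`, `a + b = i`; then
`h • (x ⊗ y) = Σ h₁x ⊗ h₂y`. If `i > n_x + n_y`, every summand has `a > n_x` or `b > n_y`, so it
vanishes. Thus `n_x + n_y` (a fortiori `2n_x + 2n_y`) bounds `x ⊗ y`, and the maximum of two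
bounds bounds a sum.
-/

def IsDiagBound (G : CoalgebraGrading k H) (t : U ⊗[k] V) (n : ℕ) : Prop :=
  ∀ i, n < i → ∀ h ∈ G.grade i, diagAct k h t = 0

section

variable {k}

theorem tsub_le_ker_map_of_le_ker_left {M N P Q : Type*} [AddCommGroup M] [Module k M]
    [AddCommGroup N] [Module k N] [AddCommGroup P] [Module k P] [AddCommGroup Q] [Module k Q]
    {A : Submodule k M} (B : Submodule k N) {f : M →ₗ[k] P} (g : N →ₗ[k] Q)
    (hA : A ≤ LinearMap.ker f) : tsub k A B ≤ LinearMap.ker (TensorProduct.map f g) := by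
  rintro _ ⟨t, rfl⟩
  rw [LinearMap.mem_ker, ← LinearMap.comp_apply, ← TensorProduct.map_comp,
    (LinearMap.ker_eq_top.mp ?_ : f ∘ₗ A.subtype = 0), TensorProduct.map_zero_left,
    LinearMap.zero_apply]
  exact top_unique fun a _ => hA a.2

theorem tsub_le_ker_map_of_le_ker_right {M N P Q : Type*} [AddCommGroup M] [Module k M]
    [AddCommGroup N] [Module k N] [AddCommGroup P] [Module k P] [AddCommGroup Q] [Module k Q]
    (A : Submodule k M) {B : Submodule k N} (f : M →ₗ[k] P) {g : N →ₗ[k] Q}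
    (hB : B ≤ LinearMap.ker g) : tsub k A B ≤ LinearMap.ker (TensorProduct.map f g) := by
  rintro _ ⟨t, rfl⟩
  rw [LinearMap.mem_ker, ← LinearMap.comp_apply, ← TensorProduct.map_comp,
    (LinearMap.ker_eq_top.mp ?_ : g ∘ₗ B.subtype = 0), TensorProduct.map_zero_right,
    LinearMap.zero_apply]
  exact top_unique fun b _ => hB b.2

theorem diagAct_tmul (h : H) (x : U) (y : V) :
    diagAct k h (x ⊗ₜ[k] y) =
      TensorProduct.map ((act k H U).flip x) ((act k H V).flip y)
        (Coalgebra.comul (R := k) h) := by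
  change TensorProduct.homTensorHomMap _ _ _ _ _
    (TensorProduct.map (act k H U) (act k H V) (Coalgebra.comul (R := k) h)) (x ⊗ₜ[k] y) = _
  induction Coalgebra.comul (R := k) h with
  | zero => simp
  | tmul a b => simp [act]
  | add c d hc hd => simp only [map_add, LinearMap.add_apply, hc, hd]

theorem IsDiagBound.mono {G : CoalgebraGrading k H} {t : U ⊗[k] V} {n m : ℕ}
    (ht : IsDiagBound k G t n) (hnm : n ≤ m) : IsDiagBound k G t m :=
  fun i hi => ht i (hnm.trans_lt hi)

theorem IsDiagBound.add {G : CoalgebraGrading k H} {s t : U ⊗[k] V} {m n : ℕ}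
    (hs : IsDiagBound k G s m) (ht : IsDiagBound k G t n) :
    IsDiagBound k G (s + t) (max m n) := by
  intro i hi h hh
  rw [map_add, hs.mono (le_max_left m n) i hi h hh, ht.mono (le_max_right m n) i hi h hh,
    add_zero]

theorem isDiagBound_tmul (G : CoalgebraGrading k H) {x : U} {y : V} {nx ny : ℕ}
    (hx : G.IsBound k x nx) (hy : G.IsBound k y ny) :
    IsDiagBound k G (x ⊗ₜ[k] y) (nx + ny) := by
  intro i hi h hh
  rw [diagAct_tmul, ← LinearMap.mem_ker]
  refine SetLike.le_def.mp (iSup_le fun p => ?_) (G.comul_mem i h hh)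
  obtain ⟨⟨a, b⟩, hab⟩ := p
  rcases Nat.lt_or_ge nx a with ha | ha
  · exact tsub_le_ker_map_of_le_ker_left _ _ fun h' hh' => hx a ha h' hh'
  · exact tsub_le_ker_map_of_le_ker_right _ _ fun h' hh' => hy b (by omega) h' hh'

theorem exists_isDiagBound (G : CoalgebraGrading k H) (hU : G.FinCycles k U)
    (hV : G.FinCycles k V) (t : U ⊗[k] V) : ∃ n, IsDiagBound k G t n := by
  induction t with
  | zero => exact ⟨0, fun _ _ h _ => map_zero (diagAct k h)⟩
  | tmul x y =>
    obtain ⟨nx, hx⟩ := hU x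
    obtain ⟨ny, hy⟩ := hV y
    exact ⟨nx + ny, isDiagBound_tmul G hx hy⟩
  | add s t hs ht =>
    obtain ⟨m, hs⟩ := hs
    obtain ⟨n, ht⟩ := ht
    exact ⟨max m n, hs.add ht⟩

end

theorem tensor_finCycles (G : CoalgebraGrading k H)
    (hU : G.FinCycles k U) (hV : G.FinCycles k V) :
    (∀ t : U ⊗[k] V, ∃ n : ℕ, ∀ i, n < i → ∀ h ∈ G.grade i, diagAct k h t = 0) ∧
    (∀ (x : U) (y : V) (nx ny : ℕ), G.IsBound k x nx → G.IsBound k y ny →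
      ∀ i, 2 * nx + 2 * ny < i → ∀ h ∈ G.grade i, diagAct k h (x ⊗ₜ[k] y) = 0) :=
  ⟨exists_isDiagBound G hU hV,
    fun _ _ _ _ hx hy => (isDiagBound_tmul G hx hy).mono (by omega)⟩

end LQTPaper
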